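/- arXiv:1810.07393 — 3 statements merged into one kernel-verified Lean document; each statement's English description precedes it below -/
import Mathlib

section
/- Let n, p, C̄ ≥ 1 be integers, η > 0, L > 0, γ_A ∈ (0,1), Q_A > 0, and fix k ≥ C̄−1. Let A_{k−C̄+1}, …, A_k be row-stochastic n×n matrices and φ_{k−C̄+1}, …, φ_{k+1} stochastic vectors in ℝ^n with φ_jᵀ = φ_{j+1}ᵀ A_j for each j. Let x_j, y_j ∈ (ℝ^p)^n (j = k−C̄+1, …, k+1 for x; j = k−C̄+1, …, k for y) satisfy the blockwise update x_{j+1}^i = ∑_{l=1}^n [A_j]_{il} x_j^l − η y_j^i. Define x̄_j = ∑_{i=1}^n [φ_j]_i x_j^i and x̃_j = (x_j^i − x̄_j)_{i=1}^n. Assume: (a) for all b ∈ (ℝ^p)^n, ‖((I_n − 1_n φ_{k+1}ᵀ)A_k A_{k−1}⋯A_{k−C̄+1} ⊗ I_p) b‖ ≤ γ_A ‖((I_n − 1_n φ_{k−C̄+1}ᵀ) ⊗ I_p) b‖; (b) for every j with k−C̄+2 ≤ j ≤ k+1 and all c ∈ (ℝ^p)^n, ‖((I_n − 1_n φ_{k+1}ᵀ)A_k⋯A_j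 ⊗ I_p) c‖ ≤ Q_A ‖c‖ (the matrix product being I_n when j = k+1); and (c) there are nonnegative reals ρ_j, σ_j with ‖y_j‖ ≤ nL‖x̃_j‖ + nLρ_j + σ_j for j = k−C̄+1, …, k. Then ‖x̃_{k+1}‖ ≤ (γ_A + ηQ_A nL)‖x̃_{k−C̄+1}‖ + ηQ_A nL ∑_{l=0}^{C̄−2}‖x̃_{k−l}‖ + ηQ_A nL (ρ_{k−C̄+1} + ∑_{l=0}^{C̄−2} ρ_{k−l}) + ηQ_A (σ_{k−C̄+1} + ∑_{l=0}^{C̄−2} σ_{k−l}). -/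
open Matrix

/-- The block ℓ₂ norm on `(ℝ^p)^n`: `‖x‖ = (∑_i ‖x^i‖₂²)^{1/2}`. -/
noncomputable def bnorm {n p : ℕ} (x : Fin n → EuclideanSpace ℝ (Fin p)) : ℝ :=
  Real.sqrt (∑ i, ‖x i‖ ^ 2)

/-- The blockwise action `(M ⊗ I_p)` of an `n×n` matrix on `(ℝ^p)^n`:
`((M ⊗ I_p)x)^i = ∑_j M_{ij} x^j`. -/
noncomputable def mapp {n p : ℕ} (M : Matrix (Fin n) (Fin n) ℝ)
    (x : Fin n → EuclideanSpace ℝ (Fin p)) : Fin n → EuclideanSpace ℝ (Fin p) :=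
  fun i => ∑ j, M i j • x j

/-- The matrix `I_n − 1_n φᵀ`. -/
noncomputable def proj {n : ℕ} (φ : Fin n → ℝ) : Matrix (Fin n) (Fin n) ℝ :=
  1 - Matrix.vecMulVec (fun _ => 1) φ

/-- The backward matrix product `A_hi ⋯ A_lo` (empty product, when `hi + 1 ≤ lo`, is `I`). -/
noncomputable def bprod {n : ℕ} (A : ℕ → Matrix (Fin n) (Fin n) ℝ) (lo hi : ℕ) :
    Matrix (Fin n) (Fin n) ℝ :=
  (((List.range (hi + 1 - lo)).map fun t => A (lo + t)).reverse).prod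

/-
Unrolling the update `x_{j+1} = (A_j ⊗ I_p) x_j − η y_j` over the window `k−C̄+1, …, k` gives
`x_{k+1} = (A_k⋯A_{k−C̄+1} ⊗ I_p) x_{k−C̄+1} − η ∑_m (A_k⋯A_{m+1} ⊗ I_p) y_m`.
Since `x̃_j = ((I − 1 φ_jᵀ) ⊗ I_p) x_j`, applying `(I − 1 φ_{k+1}ᵀ) ⊗ I_p` yields `x̃_{k+1}`;
the first term is contracted by (a) down to `γ_A ‖x̃_{k−C̄+1}‖`, each term of the sum is
bounded through (b) and (c), and the triangle inequality collects everything.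
-/

section BlockNorm

variable {n p : ℕ}

lemma bnorm_eq_norm_toLp (x : Fin n → EuclideanSpace ℝ (Fin p)) :
    bnorm x = ‖WithLp.toLp 2 x‖ := by
  rw [PiLp.norm_eq_of_L2]; rfl

lemma bnorm_sub_smul_sum_le {ι : Type*} (u : Fin n → EuclideanSpace ℝ (Fin p))
    (v : ι → Fin n → EuclideanSpace ℝ (Fin p)) (s : Finset ι) {η : ℝ} (hη : 0 ≤ η) :
    bnorm (u - η • ∑ m ∈ s, v m) ≤ bnorm u + η * ∑ m ∈ s, bnorm (v m) := by
  simp only [bnorm_eq_norm_toLp, WithLp.toLp_sub, WithLp.toLp_smul, WithLp.toLp_sum]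
  calc _ ≤ ‖WithLp.toLp 2 u‖ + ‖η • ∑ m ∈ s, WithLp.toLp 2 (v m)‖ := norm_sub_le _ _
    _ ≤ _ := by
      rw [norm_smul, Real.norm_of_nonneg hη]
      gcongr
      exact norm_sum_le _ _

end BlockNorm

section BlockAction

variable {n p : ℕ}

lemma mapp_one (x : Fin n → EuclideanSpace ℝ (Fin p)) : mapp 1 x = x := by
  funext i
  simp [mapp, Matrix.one_apply, ite_smul]

lemma mapp_mul (M N : Matrix (Fin n) (Fin n) ℝ) (x : Fin n → EuclideanSpace ℝ (Fin p)) :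
    mapp (M * N) x = mapp M (mapp N x) := by
  funext i
  simp only [mapp, Matrix.mul_apply, Finset.sum_smul, Finset.smul_sum, mul_smul]
  exact Finset.sum_comm

lemma mapp_sub (M : Matrix (Fin n) (Fin n) ℝ) (a b : Fin n → EuclideanSpace ℝ (Fin p)) :
    mapp M (a - b) = mapp M a - mapp M b := by
  funext i
  simp [mapp, smul_sub, Finset.sum_sub_distrib]

lemma mapp_smul (M : Matrix (Fin n) (Fin n) ℝ) (c : ℝ) (a : Fin n → EuclideanSpace ℝ (Fin p)) :
    mapp M (c • a) = c • mapp M a := by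
  funext i
  simp [mapp, Finset.smul_sum, smul_comm c]

lemma mapp_sum {ι : Type*} (M : Matrix (Fin n) (Fin n) ℝ) (s : Finset ι)
    (f : ι → Fin n → EuclideanSpace ℝ (Fin p)) :
    mapp M (∑ m ∈ s, f m) = ∑ m ∈ s, mapp M (f m) := by
  funext i
  simp only [mapp, Finset.sum_apply, Finset.smul_sum]
  exact Finset.sum_comm

lemma mapp_proj (φ : Fin n → ℝ) (x : Fin n → EuclideanSpace ℝ (Fin p)) :
    mapp (proj φ) x = fun i => x i - ∑ l, φ l • x l := by
  funext i
  simp [mapp, proj, Matrix.one_apply, Matrix.vecMulVec_apply, sub_smul, Finset.sum_sub_distrib,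
    ite_smul]

end BlockAction

section BackwardProduct

variable {n p : ℕ} (A : ℕ → Matrix (Fin n) (Fin n) ℝ)

lemma bprod_eq_one_of_lt {lo hi : ℕ} (h : hi < lo) : bprod A lo hi = 1 := by
  simp [bprod, Nat.sub_eq_zero_of_le h]

lemma bprod_eq_bprod_succ_mul {lo hi : ℕ} (h : lo ≤ hi) :
    bprod A lo hi = bprod A (lo + 1) hi * A lo := by
  obtain ⟨d, hd⟩ : ∃ d, hi + 1 - lo = d + 1 := ⟨hi - lo, by omega⟩
  have hd' : hi + 1 - (lo + 1) = d := by omega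
  simp only [bprod, hd, hd', List.range_succ_eq_map, List.map_cons, List.map_map,
    List.reverse_cons, List.prod_append, List.prod_cons, List.prod_nil, mul_one, add_zero]
  congr 4
  funext t
  exact congrArg A (by omega)

lemma eq_mapp_bprod_sub_smul_sum {x y : ℕ → Fin n → EuclideanSpace ℝ (Fin p)} {η : ℝ}
    {lo hi : ℕ} (hlo : lo ≤ hi + 1)
    (hrec : ∀ j, lo ≤ j → j ≤ hi → x (j + 1) = mapp (A j) (x j) - η • y j) :
    x (hi + 1) = mapp (bprod A lo hi) (x lo) -
      η • ∑ m ∈ Finset.Ico lo (hi + 1), mapp (bprod A (m + 1) hi) (y m) := by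
  obtain ⟨d, hd⟩ : ∃ d, lo + d = hi + 1 := ⟨hi + 1 - lo, by omega⟩
  induction d generalizing lo with
  | zero =>
    subst hd
    rw [bprod_eq_one_of_lt A (Nat.lt_succ_self hi), mapp_one, Finset.Ico_self,
      Finset.sum_empty, smul_zero, sub_zero]
  | succ d ih =>
    have hlo' : lo ≤ hi := by omega
    rw [ih (lo := lo + 1) (by omega) (fun j hj => hrec j (by omega)) (by omega),
      hrec lo le_rfl hlo', mapp_sub, mapp_smul, ← mapp_mul, ← bprod_eq_bprod_succ_mul A hlo',
      Finset.sum_eq_sum_Ico_succ_bot (by omega : lo < hi + 1), smul_add, sub_sub]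

end BackwardProduct

lemma Finset.sum_Ico_sub_eq_add_sum_range {M : Type*} [AddCommMonoid M] (f : ℕ → M)
    {k c : ℕ} (hc : c ≤ k) :
    ∑ m ∈ Finset.Ico (k - c) (k + 1), f m = f (k - c) + ∑ l ∈ Finset.range c, f (k - l) := by
  induction c with
  | zero => simp
  | succ c ih =>
    rw [Finset.sum_eq_sum_Ico_succ_bot (by omega), Nat.sub_add_eq, Nat.sub_add_cancel (by omega),
      ih (by omega), Finset.sum_range_succ, add_comm (f (k - c)), ← add_assoc]

theorem stmt7_general (n p Cb : ℕ) (hCb : 1 ≤ Cb)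
    (η L γA QA : ℝ) (hη : 0 < η)
    (hQA : 0 < QA)
    (k : ℕ) (hk : Cb - 1 ≤ k)
    (A : ℕ → Matrix (Fin n) (Fin n) ℝ)
    (φ : ℕ → Fin n → ℝ)
    (x y : ℕ → Fin n → EuclideanSpace ℝ (Fin p))
    (hupd : ∀ j, k + 1 - Cb ≤ j → j ≤ k →
      ∀ i, x (j + 1) i = (∑ l, A j i l • x j l) - η • y j i)
    (xbar : ℕ → EuclideanSpace ℝ (Fin p))
    (hxbar : ∀ j, xbar j = ∑ i, φ j i • x j i)
    (xtld : ℕ → Fin n → EuclideanSpace ℝ (Fin p))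
    (hxtld : ∀ j i, xtld j i = x j i - xbar j)
    (ha : ∀ b : Fin n → EuclideanSpace ℝ (Fin p),
      bnorm (mapp (proj (φ (k + 1)) * bprod A (k + 1 - Cb) k) b) ≤
        γA * bnorm (mapp (proj (φ (k + 1 - Cb))) b))
    (hb : ∀ j, k + 2 - Cb ≤ j → j ≤ k + 1 → ∀ c : Fin n → EuclideanSpace ℝ (Fin p),
      bnorm (mapp (proj (φ (k + 1)) * bprod A j k) c) ≤ QA * bnorm c)
    (ρ σ : ℕ → ℝ)
    (hc : ∀ j, k + 1 - Cb ≤ j → j ≤ k →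
      bnorm (y j) ≤ n * L * bnorm (xtld j) + n * L * ρ j + σ j) :
    bnorm (xtld (k + 1)) ≤
      (γA + η * QA * n * L) * bnorm (xtld (k + 1 - Cb)) +
        η * QA * n * L * ∑ l ∈ Finset.range (Cb - 1), bnorm (xtld (k - l)) +
        η * QA * n * L * (ρ (k + 1 - Cb) + ∑ l ∈ Finset.range (Cb - 1), ρ (k - l)) +
        η * QA * (σ (k + 1 - Cb) + ∑ l ∈ Finset.range (Cb - 1), σ (k - l)) := by
  have hxtld_eq : ∀ j, xtld j = mapp (proj (φ j)) (x j) := fun j => by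
    rw [mapp_proj]; funext i; rw [hxtld, hxbar]
  have hunroll : xtld (k + 1) =
      mapp (proj (φ (k + 1)) * bprod A (k + 1 - Cb) k) (x (k + 1 - Cb)) -
        η • ∑ m ∈ Finset.Ico (k + 1 - Cb) (k + 1),
          mapp (proj (φ (k + 1)) * bprod A (m + 1) k) (y m) := by
    rw [hxtld_eq, eq_mapp_bprod_sub_smul_sum A (by omega) fun j hj₁ hj₂ => funext (hupd j hj₁ hj₂),
      mapp_sub, mapp_smul, mapp_sum]
    simp only [← mapp_mul]
  have hterm : ∀ m ∈ Finset.Ico (k + 1 - Cb) (k + 1),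
      bnorm (mapp (proj (φ (k + 1)) * bprod A (m + 1) k) (y m)) ≤
        QA * (n * L * bnorm (xtld m) + n * L * ρ m + σ m) := fun m hm => by
    rw [Finset.mem_Ico] at hm
    exact (hb (m + 1) (by omega) (by omega) (y m)).trans
      (mul_le_mul_of_nonneg_left (hc m hm.1 (by omega)) hQA.le)
  calc bnorm (xtld (k + 1))
      ≤ γA * bnorm (xtld (k + 1 - Cb)) + η * ∑ m ∈ Finset.Ico (k + 1 - Cb) (k + 1),
          QA * (n * L * bnorm (xtld m) + n * L * ρ m + σ m) := by
        rw [hunroll]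
        refine (bnorm_sub_smul_sum_le _ _ _ hη.le).trans (add_le_add ?_ ?_)
        · rw [hxtld_eq]; exact ha _
        · exact mul_le_mul_of_nonneg_left (Finset.sum_le_sum hterm) hη.le
    _ = _ := by
        rw [show k + 1 - Cb = k - (Cb - 1) by omega, Finset.sum_Ico_sub_eq_add_sum_range _ hk]
        simp only [← Finset.mul_sum, Finset.sum_add_distrib]
        ring

/-- Multi-step bound on the weighted consensus error `x̃` (Lemma 5 of the paper). -/
theorem stmt7 (n p Cb : ℕ) (hn : 1 ≤ n) (hp : 1 ≤ p) (hCb : 1 ≤ Cb)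
    (η L γA QA : ℝ) (hη : 0 < η) (hL : 0 < L)
    (hγA : γA ∈ Set.Ioo (0 : ℝ) 1) (hQA : 0 < QA)
    (k : ℕ) (hk : Cb - 1 ≤ k)
    (A : ℕ → Matrix (Fin n) (Fin n) ℝ)
    (hAnn : ∀ j, k + 1 - Cb ≤ j → j ≤ k → ∀ i l, 0 ≤ A j i l)
    (hArow : ∀ j, k + 1 - Cb ≤ j → j ≤ k → ∀ i, ∑ l, A j i l = 1)
    (φ : ℕ → Fin n → ℝ)
    (hφst : ∀ j, k + 1 - Cb ≤ j → j ≤ k + 1 → (∀ i, 0 ≤ φ j i) ∧ ∑ i, φ j i = 1)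
    (hφabs : ∀ j, k + 1 - Cb ≤ j → j ≤ k → φ j = Matrix.vecMul (φ (j + 1)) (A j))
    (x y : ℕ → Fin n → EuclideanSpace ℝ (Fin p))
    (hupd : ∀ j, k + 1 - Cb ≤ j → j ≤ k →
      ∀ i, x (j + 1) i = (∑ l, A j i l • x j l) - η • y j i)
    (xbar : ℕ → EuclideanSpace ℝ (Fin p))
    (hxbar : ∀ j, xbar j = ∑ i, φ j i • x j i)
    (xtld : ℕ → Fin n → EuclideanSpace ℝ (Fin p))
    (hxtld : ∀ j i, xtld j i = x j i - xbar j)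
    (ha : ∀ b : Fin n → EuclideanSpace ℝ (Fin p),
      bnorm (mapp (proj (φ (k + 1)) * bprod A (k + 1 - Cb) k) b) ≤
        γA * bnorm (mapp (proj (φ (k + 1 - Cb))) b))
    (hb : ∀ j, k + 2 - Cb ≤ j → j ≤ k + 1 → ∀ c : Fin n → EuclideanSpace ℝ (Fin p),
      bnorm (mapp (proj (φ (k + 1)) * bprod A j k) c) ≤ QA * bnorm c)
    (ρ σ : ℕ → ℝ)
    (hρ : ∀ j, 0 ≤ ρ j) (hσ : ∀ j, 0 ≤ σ j)
    (hc : ∀ j, k + 1 - Cb ≤ j → j ≤ k →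
      bnorm (y j) ≤ n * L * bnorm (xtld j) + n * L * ρ j + σ j) :
    bnorm (xtld (k + 1)) ≤
      (γA + η * QA * n * L) * bnorm (xtld (k + 1 - Cb)) +
        η * QA * n * L * ∑ l ∈ Finset.range (Cb - 1), bnorm (xtld (k - l)) +
        η * QA * n * L * (ρ (k + 1 - Cb) + ∑ l ∈ Finset.range (Cb - 1), ρ (k - l)) +
        η * QA * (σ (k + 1 - Cb) + ∑ l ∈ Finset.range (Cb - 1), σ (k - l)) :=
  stmt7_general n p Cb hCb η L γA QA hη hQA k hk A φ x y hupd xbar hxbar xtld hxtld ha hb ρ σ hc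
end

section
/- Let n, p ≥ 1 and C ≥ 1 be integers, L ≥ μ > 0, and 0 < η < 1/(nL). Let f_1, …, f_n : ℝ^p → ℝ be differentiable with L-Lipschitz gradients such that f = (1/n)∑_{i=1}^n f_i is μ-strongly convex, and let x* be the minimizer of f (so ∇f(x*) = 0). Let A be a row-stochastic n×n matrix and φ, φ⁺ stochastic vectors in ℝ^n with φᵀ = (φ⁺)ᵀ A. Let v ∈ ℝ^n with 1/n^{nC} ≤ v_i ≤ 1 for all i. Let x, y, s̃ ∈ (ℝ^p)^n satisfy: (i) ∑_{j=1}^n y^j = ∑_{j=1}^n ∇f_j(x^j), and (ii) y^i − v_i ∑_{j=1}^n y^j = v_i s̃^i for all i. Define x⁺ ∈ (ℝ^p)^n by (x⁺)^i = ∑_{j=1}^n A_{ij} x^j − η y^i, and set x̄ = ∑_i φ_i x^i, x̄⁺ = ∑_i φ⁺_i (x⁺)^i, x̃ = (x^i − x̄)_i, r = (x̄−x*,…,x̄−x*), r⁺ = (x̄⁺−x*,…,x̄⁺−x*). Then ‖r⁺‖ ≤ η nL ‖x̃‖ + (1 − ημ/n^{nC−1}) ‖r‖ + η√n ‖s̃‖.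 -/
/-!
Averaging the update with `φ⁺` and using `φᵀ = (φ⁺)ᵀ A` gives
`x̄⁺ = x̄ - η (β ∑ⱼ ∇fⱼ(xʲ) + ∑ᵢ φ⁺ᵢ vᵢ s̃ⁱ)` with `β = ∑ᵢ φ⁺ᵢ vᵢ ∈ [n^{-nC}, 1]`.
Since `∑ⱼ ∇fⱼ(xʲ) = n ∇f(x̄) + ∑ⱼ (∇fⱼ(xʲ) - ∇fⱼ(x̄))`, this is a gradient step of size
`ηβn < 1/L` on `f`, which contracts the distance to `x*` by the factor `1 - ηβnμ`
(cocoercivity of the gradient of the convex function `f - μ/2 ‖·‖²`), perturbed by errors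
bounded through Cauchy–Schwarz by `L √n ‖x̃‖` and `‖s̃‖`.
-/

open Matrix

open scoped RealInnerProductSpace

section Smooth

variable {E : Type*} [NormedAddCommGroup E] [InnerProductSpace ℝ E]

theorem norm_sub_sq_le_mul_inner_of_quadratic_bounds {g : E → ℝ} {G : E → E} {K : ℝ}
    (hK : 0 < K) (hlower : ∀ a b, g a + ⟪G a, b - a⟫ ≤ g b)
    (hupper : ∀ a b, g b ≤ g a + ⟪G a, b - a⟫ + K / 2 * ‖b - a‖ ^ 2) (a b : E) :
    ‖G b - G a‖ ^ 2 ≤ K * ⟪G b - G a, b - a⟫ := by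
  have hKc : K * K⁻¹ = 1 := mul_inv_cancel₀ hK.ne'
  -- Compare `g` at `b` and at `a` through the point `b - K⁻¹ • (G b - G a)`.
  have key : ∀ a b, g a + ⟪G a, b - a⟫ + K⁻¹ / 2 * ‖G b - G a‖ ^ 2 ≤ g b := by
    intro a b
    set d := G b - G a
    have h1 := hupper b (b - K⁻¹ • d)
    have h2 := hlower a (b - K⁻¹ • d)
    have hd : ⟪G b, d⟫ - ⟪G a, d⟫ = ‖d‖ ^ 2 := by
      rw [← inner_sub_left, real_inner_self_eq_norm_sq]
    rw [sub_sub_cancel_left, inner_neg_right, real_inner_smul_right, norm_neg, norm_smul,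
      Real.norm_of_nonneg (inv_nonneg.2 hK.le)] at h1
    rw [sub_right_comm, inner_sub_right, real_inner_smul_right] at h2
    linear_combination h1 + h2 - K⁻¹ * hd + K⁻¹ * ‖d‖ ^ 2 / 2 * hKc
  have hab := key a b
  have hba := key b a
  rw [norm_sub_rev] at hba
  have hsum : K⁻¹ * ‖G b - G a‖ ^ 2 ≤ ⟪G b - G a, b - a⟫ := by
    have : ⟪G b, a - b⟫ = -⟪G b, b - a⟫ := by rw [← inner_neg_right, neg_sub]
    rw [inner_sub_left]
    linarith
  calc ‖G b - G a‖ ^ 2 = K * (K⁻¹ * ‖G b - G a‖ ^ 2) := by rw [← mul_assoc, hKc, one_mul]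
    _ ≤ K * ⟪G b - G a, b - a⟫ := by gcongr

variable [CompleteSpace E]

theorem hasDerivAt_comp_add_smul {F : E → ℝ} (hF : Differentiable ℝ F) (z u : E) (t : ℝ) :
    HasDerivAt (fun s : ℝ => F (z + s • u)) ⟪gradient F (z + t • u), u⟫ t := by
  have hline : HasDerivAt (fun s : ℝ => z + s • u) u t := by
    simpa using ((hasDerivAt_id t).smul_const u).const_add z
  rw [inner_gradient_left]
  exact (hF _).hasFDerivAt.comp_hasDerivAt t hline

theorem le_add_inner_gradient_add_sq {F : E → ℝ} (hF : Differentiable ℝ F) {L : ℝ}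
    (hlip : ∀ z w, ‖gradient F z - gradient F w‖ ≤ L * ‖z - w‖) (z w : E) :
    F w ≤ F z + ⟪gradient F z, w - z⟫ + L / 2 * ‖w - z‖ ^ 2 := by
  set u := w - z
  set g : ℝ → ℝ := fun t => F (z + t • u) - t * ⟪gradient F z, u⟫ - L / 2 * t ^ 2 * ‖u‖ ^ 2
  have hg : ∀ t, HasDerivAt g
      (⟪gradient F (z + t • u) - gradient F z, u⟫ - L * t * ‖u‖ ^ 2) t := by
    intro t
    refine (((hasDerivAt_comp_add_smul hF z u t).sub
      ((hasDerivAt_id t).mul_const ⟪gradient F z, u⟫)).sub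
      (((hasDerivAt_pow 2 t).const_mul (L / 2)).mul_const (‖u‖ ^ 2))).congr_deriv ?_
    rw [inner_sub_left]
    simp only [Nat.cast_ofNat]
    ring
  have hg_nonpos : ∀ t ∈ Set.Ioo (0 : ℝ) 1,
      ⟪gradient F (z + t • u) - gradient F z, u⟫ - L * t * ‖u‖ ^ 2 ≤ 0 := by
    intro t ht
    have : ⟪gradient F (z + t • u) - gradient F z, u⟫ ≤ L * t * ‖u‖ ^ 2 :=
      calc _ ≤ ‖gradient F (z + t • u) - gradient F z‖ * ‖u‖ := real_inner_le_norm _ _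
        _ ≤ L * ‖t • u‖ * ‖u‖ := by gcongr; simpa using hlip (z + t • u) z
        _ = L * t * ‖u‖ ^ 2 := by rw [norm_smul, Real.norm_of_nonneg ht.1.le]; ring
    linarith
  have hanti : AntitoneOn g (Set.Icc 0 1) :=
    antitoneOn_of_deriv_nonpos (convex_Icc 0 1)
      (fun t _ => (hg t).continuousAt.continuousWithinAt)
      (fun t _ => (hg t).differentiableAt.differentiableWithinAt)
      (by simpa only [interior_Icc, (hg _).deriv] using hg_nonpos)
  have h01 := hanti (Set.left_mem_Icc.2 zero_le_one) (Set.right_mem_Icc.2 zero_le_one) zero_le_one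
  simp only [g, u, zero_smul, add_zero, one_smul, add_sub_cancel] at h01
  linarith

theorem norm_sub_smul_gradient_sub_le {F : E → ℝ} (hF : Differentiable ℝ F) {L μ h : ℝ}
    (hμL : μ ≤ L) (hlip : ∀ z w, ‖gradient F z - gradient F w‖ ≤ L * ‖z - w‖)
    (hsc : ∀ z w, F w + ⟪gradient F w, z - w⟫ + μ / 2 * ‖z - w‖ ^ 2 ≤ F z)
    {xstar : E} (hstar : gradient F xstar = 0) (hh : 0 < h) (hhL : h * L < 1) (z : E) :
    ‖z - h • gradient F z - xstar‖ ≤ (1 - h * μ) * ‖z - xstar‖ := by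
  have hhμ : h * μ < 1 := (mul_le_mul_of_nonneg_left hμL hh.le).trans_lt hhL
  set K := 2 / h - 2 * μ
  have hKh : h * K = 2 - 2 * h * μ := by simp only [K]; field_simp
  have hK : 0 < K := pos_of_mul_pos_right (by linarith) hh.le
  have hLK : L ≤ K + μ := le_of_mul_le_mul_left (by linarith) hh
  -- Cocoercivity of the gradient of the convex function `F - μ/2 ‖·‖²`, with the constant `K`
  -- chosen so that `h K = 2 (1 - h μ)`: this is what turns it into the contraction.
  have hsq : ∀ a b : E,
      μ / 2 * ‖b‖ ^ 2 = μ / 2 * ‖a‖ ^ 2 + μ * ⟪a, b - a⟫ + μ / 2 * ‖b - a‖ ^ 2 := by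
    intro a b
    rw [← add_sub_cancel a b, norm_add_sq_real, add_sub_cancel_left]
    ring
  have hshift : ∀ a b : E, ⟪gradient F a - μ • a, b - a⟫ = ⟪gradient F a, b - a⟫ - μ * ⟪a, b - a⟫ :=
    fun a b => by rw [inner_sub_left, real_inner_smul_left]
  have hcoco := norm_sub_sq_le_mul_inner_of_quadratic_bounds
    (g := fun a => F a - μ / 2 * ‖a‖ ^ 2) (G := fun a => gradient F a - μ • a) hK
    (fun a b => by simp only [hshift]; linarith [hsc b a, hsq a b])
    (fun a b => by
      have := mul_le_mul_of_nonneg_right hLK (sq_nonneg ‖b - a‖)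
      simp only [hshift]
      linarith [le_add_inner_gradient_add_sq hF hlip a b, hsq a b]) xstar z
  have hdiff : gradient F z - μ • z - (gradient F xstar - μ • xstar)
      = gradient F z - μ • (z - xstar) := by rw [hstar, smul_sub]; abel
  simp only [hdiff] at hcoco
  set D := z - xstar
  set G := gradient F z
  rw [norm_sub_sq_real, inner_sub_left, norm_smul, real_inner_smul_left, real_inner_smul_right,
    real_inner_self_eq_norm_sq, Real.norm_eq_abs, mul_pow, sq_abs] at hcoco
  have hD : z - h • G - xstar = D - h • G := by simp only [D]; abel
  rw [hD, ← sq_le_sq₀ (norm_nonneg _) (mul_nonneg (by linarith) (norm_nonneg _)),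
    norm_sub_sq_real, norm_smul, real_inner_smul_right, Real.norm_eq_abs, mul_pow, sq_abs,
    real_inner_comm]
  linear_combination h ^ 2 * hcoco + h * (⟪G, D⟫ - μ * ‖D‖ ^ 2) * hKh

theorem hasGradientAt_const_mul_sum {ι : Type*} [Fintype ι] {f : ι → E → ℝ}
    (hf : ∀ i, Differentiable ℝ (f i)) (c : ℝ) (z : E) :
    HasGradientAt (fun z => c * ∑ i, f i z) (c • ∑ i, gradient (f i) z) z := by
  rw [hasGradientAt_iff_hasFDerivAt, map_smul, map_sum]
  simp only [toDual_gradient]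
  exact (HasFDerivAt.fun_sum fun i _ => (hf i z).hasFDerivAt).const_mul c

theorem gradient_average {n : ℕ} {f : Fin n → E → ℝ} (hf : ∀ i, Differentiable ℝ (f i))
    (z : E) :
    gradient (fun z => (1 / (n : ℝ)) * ∑ i, f i z) z = (n : ℝ)⁻¹ • ∑ i, gradient (f i) z := by
  rw [(hasGradientAt_const_mul_sum hf _ z).gradient, one_div]

theorem norm_gradient_average_sub_le {n : ℕ} (hn : n ≠ 0) {f : Fin n → E → ℝ}
    (hf : ∀ i, Differentiable ℝ (f i)) {L : ℝ}
    (hlip : ∀ i z w, ‖gradient (f i) z - gradient (f i) w‖ ≤ L * ‖z - w‖) (z w : E) :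
    ‖gradient (fun z => (1 / (n : ℝ)) * ∑ i, f i z) z
      - gradient (fun z => (1 / (n : ℝ)) * ∑ i, f i z) w‖ ≤ L * ‖z - w‖ := by
  rw [gradient_average hf, gradient_average hf, ← smul_sub, ← Finset.sum_sub_distrib, norm_smul,
    norm_inv, Real.norm_natCast, inv_mul_le_iff₀ (by positivity)]
  calc _ ≤ ∑ i, ‖gradient (f i) z - gradient (f i) w‖ := norm_sum_le _ _
    _ ≤ ∑ _i : Fin n, L * ‖z - w‖ := Finset.sum_le_sum fun i _ => hlip i z w
    _ = n * (L * ‖z - w‖) := by simp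

theorem norm_inexact_gradient_step_sub_le {n : ℕ} (hn : n ≠ 0) {f : Fin n → E → ℝ}
    (hf : ∀ i, Differentiable ℝ (f i)) {L μ : ℝ} (hL : 0 ≤ L) (hμL : μ ≤ L)
    (hlip : ∀ i z w, ‖gradient (f i) z - gradient (f i) w‖ ≤ L * ‖z - w‖)
    {F : E → ℝ} (hF : F = fun z => (1 / (n : ℝ)) * ∑ i, f i z)
    (hsc : ∀ z w, F w + ⟪gradient F w, z - w⟫ + μ / 2 * ‖z - w‖ ^ 2 ≤ F z)
    {xstar : E} (hstar : gradient F xstar = 0)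
    {η β : ℝ} (hη : 0 < η) (hβ : 0 < β) (hβ1 : β ≤ 1) (hηnL : η * (n * L) < 1)
    (x : Fin n → E) (z e : E) :
    ‖z - η • (β • ∑ i, gradient (f i) (x i) + e) - xstar‖
      ≤ (1 - η * β * n * μ) * ‖z - xstar‖ + η * (L * ∑ i, ‖x i - z‖ + ‖e‖) := by
  have hFdiff : Differentiable ℝ F :=
    hF ▸ fun z => (hasGradientAt_const_mul_sum hf _ z).differentiableAt
  have hFlip : ∀ z w, ‖gradient F z - gradient F w‖ ≤ L * ‖z - w‖ :=
    hF ▸ norm_gradient_average_sub_le hn hf hlip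
  have hsumgrad : ∀ z, ∑ i, gradient (f i) z = (n : ℝ) • gradient F z := fun z => by
    rw [hF, gradient_average hf, smul_inv_smul₀ (Nat.cast_ne_zero.2 hn)]
  have hhL : η * β * n * L < 1 := by
    calc η * β * n * L = β * (η * (n * L)) := by ring
      _ ≤ η * (n * L) := mul_le_of_le_one_left (by positivity) hβ1
      _ < 1 := hηnL
  have hdecomp : z - η • (β • ∑ i, gradient (f i) (x i) + e) - xstar
      = (z - (η * β * n) • gradient F z - xstar)
        - η • (β • ∑ i, (gradient (f i) (x i) - gradient (f i) z) + e) := by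
    rw [Finset.sum_sub_distrib, hsumgrad]
    module
  have herr : ‖∑ i, (gradient (f i) (x i) - gradient (f i) z)‖ ≤ L * ∑ i, ‖x i - z‖ := by
    rw [Finset.mul_sum]
    exact (norm_sum_le _ _).trans (Finset.sum_le_sum fun i _ => hlip i _ _)
  rw [hdecomp]
  refine (norm_sub_le _ _).trans (add_le_add
    (norm_sub_smul_gradient_sub_le hFdiff hμL hFlip hsc hstar (by positivity) hhL z) ?_)
  rw [norm_smul, Real.norm_of_nonneg hη.le]
  gcongr
  refine (norm_add_le _ _).trans (add_le_add_left ?_ _)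
  rw [norm_smul, Real.norm_of_nonneg hβ.le]
  exact mul_le_of_le_one_left (norm_nonneg _) hβ1 |>.trans herr

end Smooth

theorem sum_smul_sum_smul_eq_vecMul {ι M : Type*} [Fintype ι] [AddCommMonoid M] [Module ℝ M]
    (w : ι → ℝ) (A : Matrix ι ι ℝ) (x : ι → M) :
    ∑ i, w i • ∑ j, A i j • x j = ∑ j, vecMul w A j • x j := by
  simp only [Finset.smul_sum, smul_smul, vecMul, dotProduct, Finset.sum_smul]
  exact Finset.sum_comm

theorem weighted_average_update_eq {ι M : Type*} [Fintype ι] [AddCommGroup M] [Module ℝ M]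
    (A : Matrix ι ι ℝ) {φ φp v : ι → ℝ} (hφ : φ = vecMul φp A) (η : ℝ) {x y s xp : ι → M}
    (hs : ∀ i, y i - v i • ∑ j, y j = v i • s i) (hxp : ∀ i, xp i = (∑ j, A i j • x j) - η • y i) :
    ∑ i, φp i • xp i
      = ∑ i, φ i • x i - η • ((∑ i, φp i * v i) • ∑ j, y j + ∑ i, (φp i * v i) • s i) := by
  have hy : ∑ i, φp i • y i = (∑ i, φp i * v i) • ∑ j, y j + ∑ i, (φp i * v i) • s i := by
    simp only [Finset.sum_smul, ← Finset.sum_add_distrib, ← smul_smul, ← smul_add, ← hs,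
      add_sub_cancel]
  simp only [hxp, smul_sub, Finset.sum_sub_distrib, sum_smul_sum_smul_eq_vecMul, ← hφ,
    smul_comm _ η, ← Finset.smul_sum, hy]

section BlockNorm

variable {n p : ℕ}

theorem bnorm_nonneg (x : Fin n → EuclideanSpace ℝ (Fin p)) : 0 ≤ bnorm x :=
  Real.sqrt_nonneg _

theorem bnorm_of_forall_eq {x : Fin n → EuclideanSpace ℝ (Fin p)} {c : EuclideanSpace ℝ (Fin p)}
    (hx : ∀ i, x i = c) : bnorm x = √n * ‖c‖ := by
  simp [bnorm, hx, Real.sqrt_mul (Nat.cast_nonneg n)]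

theorem norm_sum_smul_le_bnorm {c : Fin n → ℝ} (hc : ∀ i, 0 ≤ c i) (hc1 : ∑ i, c i ≤ 1)
    (x : Fin n → EuclideanSpace ℝ (Fin p)) : ‖∑ i, c i • x i‖ ≤ bnorm x := by
  have hsq : ∑ i, c i ^ 2 ≤ 1 := by
    refine le_trans (Finset.sum_le_sum fun i _ => ?_) hc1
    have : c i ≤ 1 := le_trans (Finset.single_le_sum (fun j _ => hc j) (Finset.mem_univ i)) hc1
    nlinarith [hc i]
  calc ‖∑ i, c i • x i‖ ≤ ∑ i, c i * ‖x i‖ := by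
        refine (norm_sum_le _ _).trans_eq (Finset.sum_congr rfl fun i _ => ?_)
        rw [norm_smul, Real.norm_of_nonneg (hc i)]
    _ ≤ √(∑ i, c i ^ 2) * bnorm x := Real.sum_mul_le_sqrt_mul_sqrt _ _ _
    _ ≤ bnorm x := mul_le_of_le_one_left (Real.sqrt_nonneg _) (Real.sqrt_le_one.2 hsq)

theorem sum_norm_le_sqrt_mul_bnorm (x : Fin n → EuclideanSpace ℝ (Fin p)) :
    ∑ i, ‖x i‖ ≤ √n * bnorm x := by
  simpa [bnorm] using Real.sum_mul_le_sqrt_mul_sqrt Finset.univ (fun _ => (1 : ℝ)) (‖x ·‖)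

end BlockNorm

theorem one_div_pow_pred_le_mul {m : ℕ} (hm : 1 ≤ m) {k : ℕ} {β : ℝ}
    (hβ : 1 / (m : ℝ) ^ k ≤ β) : 1 / (m : ℝ) ^ (k - 1) ≤ β * m := by
  have hm' : (1 : ℝ) ≤ m := by exact_mod_cast hm
  calc 1 / (m : ℝ) ^ (k - 1) = m / (m : ℝ) ^ (k - 1 + 1) := by
        rw [pow_succ]; field_simp
    _ ≤ m / (m : ℝ) ^ k := by
        gcongr
        omega
    _ = 1 / (m : ℝ) ^ k * m := by ring
    _ ≤ β * m := by gcongr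

theorem stmt8_general (n p C : ℕ) (hn : 1 ≤ n)
    (L μ : ℝ) (hμ : 0 < μ) (hμL : μ ≤ L)
    (η : ℝ) (hη : 0 < η) (hη' : η < 1 / (n * L))
    (f : Fin n → EuclideanSpace ℝ (Fin p) → ℝ)
    (hdiff : ∀ i, Differentiable ℝ (f i))
    (hlip : ∀ i z w, ‖gradient (f i) z - gradient (f i) w‖ ≤ L * ‖z - w‖)
    (F : EuclideanSpace ℝ (Fin p) → ℝ)
    (hF : F = fun z => (1 / (n : ℝ)) * ∑ i, f i z)
    (hsc : ∀ z w : EuclideanSpace ℝ (Fin p),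
      F w + (inner ℝ (gradient F w) (z - w) : ℝ) + μ / 2 * ‖z - w‖ ^ 2 ≤ F z)
    (xstar : EuclideanSpace ℝ (Fin p)) (hmin : ∀ z, F xstar ≤ F z)
    (A : Matrix (Fin n) (Fin n) ℝ)
    (φ φp : Fin n → ℝ)
    (hφpst : (∀ i, 0 ≤ φp i) ∧ ∑ i, φp i = 1)
    (hφabs : φ = Matrix.vecMul φp A)
    (v : Fin n → ℝ)
    (hv : ∀ i, 1 / (n : ℝ) ^ (n * C) ≤ v i ∧ v i ≤ 1)
    (x y stld : Fin n → EuclideanSpace ℝ (Fin p))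
    (hsum : ∑ j, y j = ∑ j, gradient (f j) (x j))
    (hs : ∀ i, y i - v i • ∑ j, y j = v i • stld i)
    (xp : Fin n → EuclideanSpace ℝ (Fin p))
    (hxp : ∀ i, xp i = (∑ j, A i j • x j) - η • y i)
    (xbar xbarp : EuclideanSpace ℝ (Fin p))
    (hxbar : xbar = ∑ i, φ i • x i) (hxbarp : xbarp = ∑ i, φp i • xp i)
    (xtld : Fin n → EuclideanSpace ℝ (Fin p)) (hxtld : ∀ i, xtld i = x i - xbar)
    (r rp : Fin n → EuclideanSpace ℝ (Fin p))
    (hr : ∀ i, r i = xbar - xstar) (hrp : ∀ i, rp i = xbarp - xstar) :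
    bnorm rp ≤ η * n * L * bnorm xtld +
      (1 - η * μ / (n : ℝ) ^ (n * C - 1)) * bnorm r + η * Real.sqrt n * bnorm stld := by
  have hL : 0 ≤ L := hμ.le.trans hμL
  have hstar : gradient F xstar = 0 := by
    rw [gradient, IsLocalMin.fderiv_eq_zero (Filter.Eventually.of_forall hmin), map_zero]
  have hv0 : ∀ i, 0 ≤ v i := fun i => (one_div_pos.2 (by positivity)).le.trans (hv i).1
  set β := ∑ i, φp i * v i
  obtain ⟨hβlow, hβ1⟩ : β ∈ Set.Icc (1 / (n : ℝ) ^ (n * C)) 1 := by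
    simpa only [smul_eq_mul] using
      (convex_Icc _ _).sum_mem (fun i _ => hφpst.1 i) hφpst.2 (fun i _ => hv i)
  have hgap : ‖xbarp - xstar‖ ≤ (1 - η * β * n * μ) * ‖xbar - xstar‖
      + η * (L * ∑ i, ‖xtld i‖ + ‖∑ i, (φp i * v i) • stld i‖) := by
    rw [hxbarp, weighted_average_update_eq A hφabs η hs hxp, ← hxbar, hsum]
    simpa only [hxtld] using norm_inexact_gradient_step_sub_le (by omega) hdiff hL hμL hlip hF
      hsc hstar hη ((one_div_pos.2 (by positivity)).trans_le hβlow) hβ1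
      ((lt_div_iff₀ (one_div_pos.1 (hη.trans hη'))).1 hη') x xbar _
  have hrate : η * μ / (n : ℝ) ^ (n * C - 1) ≤ η * β * n * μ := by
    rw [div_eq_mul_one_div]
    nlinarith [one_div_pow_pred_le_mul hn hβlow, mul_pos hη hμ]
  rw [bnorm_of_forall_eq hrp, bnorm_of_forall_eq hr]
  calc √n * ‖xbarp - xstar‖
      ≤ √n * ((1 - η * μ / (n : ℝ) ^ (n * C - 1)) * ‖xbar - xstar‖
        + η * (L * (√n * bnorm xtld) + bnorm stld)) := by
        gcongr
        refine hgap.trans ?_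
        gcongr
        exacts [sum_norm_le_sqrt_mul_bnorm xtld,
          norm_sum_smul_le_bnorm (fun i => mul_nonneg (hφpst.1 i) (hv0 i)) hβ1 stld]
    _ = _ := by
      linear_combination (η * L * bnorm xtld) * Real.mul_self_sqrt (Nat.cast_nonneg (α := ℝ) n)

/-- One-step contraction of the optimality gap of the weighted average
(Lemma 6 of the paper). -/
theorem stmt8 (n p C : ℕ) (hn : 1 ≤ n) (hp : 1 ≤ p) (hC : 1 ≤ C)
    (L μ : ℝ) (hμ : 0 < μ) (hμL : μ ≤ L)
    (η : ℝ) (hη : 0 < η) (hη' : η < 1 / (n * L))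
    (f : Fin n → EuclideanSpace ℝ (Fin p) → ℝ)
    (hdiff : ∀ i, Differentiable ℝ (f i))
    (hlip : ∀ i z w, ‖gradient (f i) z - gradient (f i) w‖ ≤ L * ‖z - w‖)
    (F : EuclideanSpace ℝ (Fin p) → ℝ)
    (hF : F = fun z => (1 / (n : ℝ)) * ∑ i, f i z)
    (hsc : ∀ z w : EuclideanSpace ℝ (Fin p),
      F w + (inner ℝ (gradient F w) (z - w) : ℝ) + μ / 2 * ‖z - w‖ ^ 2 ≤ F z)
    (xstar : EuclideanSpace ℝ (Fin p)) (hmin : ∀ z, F xstar ≤ F z)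
    (A : Matrix (Fin n) (Fin n) ℝ)
    (hAnn : ∀ i j, 0 ≤ A i j) (hArow : ∀ i, ∑ j, A i j = 1)
    (φ φp : Fin n → ℝ)
    (hφst : (∀ i, 0 ≤ φ i) ∧ ∑ i, φ i = 1)
    (hφpst : (∀ i, 0 ≤ φp i) ∧ ∑ i, φp i = 1)
    (hφabs : φ = Matrix.vecMul φp A)
    (v : Fin n → ℝ)
    (hv : ∀ i, 1 / (n : ℝ) ^ (n * C) ≤ v i ∧ v i ≤ 1)
    (x y stld : Fin n → EuclideanSpace ℝ (Fin p))
    (hsum : ∑ j, y j = ∑ j, gradient (f j) (x j))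
    (hs : ∀ i, y i - v i • ∑ j, y j = v i • stld i)
    (xp : Fin n → EuclideanSpace ℝ (Fin p))
    (hxp : ∀ i, xp i = (∑ j, A i j • x j) - η • y i)
    (xbar xbarp : EuclideanSpace ℝ (Fin p))
    (hxbar : xbar = ∑ i, φ i • x i) (hxbarp : xbarp = ∑ i, φp i • xp i)
    (xtld : Fin n → EuclideanSpace ℝ (Fin p)) (hxtld : ∀ i, xtld i = x i - xbar)
    (r rp : Fin n → EuclideanSpace ℝ (Fin p))
    (hr : ∀ i, r i = xbar - xstar) (hrp : ∀ i, rp i = xbarp - xstar) :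
    bnorm rp ≤ η * n * L * bnorm xtld +
      (1 - η * μ / (n : ℝ) ^ (n * C - 1)) * bnorm r + η * Real.sqrt n * bnorm stld :=
  stmt8_general n p C hn L μ hμ hμL η hη hη' f hdiff hlip F hF hsc xstar hmin A φ φp hφpst hφabs v
    hv x y stld hsum hs xp hxp xbar xbarp hxbar hxbarp xtld hxtld r rp hr hrp
end

section
/- Let n, p ≥ 1 and C ≥ 1 be integers and β ∈ (0,1). Let (E_k)_{k≥0} be edge sets E_k ⊆ {1,…,n}×{1,…,n} with (i,i) ∈ E_k for all i, k, such that for every k ≥ 0 the directed graph with edge set ∪_{l=k}^{k+C−1} E_l is strongly connected. Let (B_k) be column-stochastic n×n matrices with [B_k]_{ij} > 0 ⇔ (i,j) ∈ E_k and [B_k]_{ij} ≥ β on edges. Define v_0 = (1/n) 1_n and v_{k+1} = B_k v_k (so each v_k is a stochastic vector with positive entries), and assume additionally that [v_k]_j ≥ 1/n^{nC+1} for all j and k. Define R_k = diag(v_{k+1})^{−1} B_k diag(v_k). Set τ = β/n^{nC+1} and Q_B = 2n(1+τ^{−nC})/(1−τ^{nC}), and let C̄_B ≥ C be an integer such that γ_B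 := Q_B (1−τ^{nC})^{(C̄_B−1)/(nC)} < 1. Then for every k ≥ C̄_B−1 and every b ∈ (ℝ^p)^n, setting a = (R_k R_{k−1} ⋯ R_{k−C̄_B+1} ⊗ I_p) b, one has ‖((I_n − 1_n v_{k+1}ᵀ) ⊗ I_p) a‖ ≤ γ_B ‖((I_n − 1_n v_{k−C̄_B+1}ᵀ) ⊗ I_p) b‖. -/
/-!
The matrices `R_k` are row-stochastic, satisfy `v_{k+1}ᵀ R_k = v_kᵀ`, and have entries at
least `τ` on the edges of `E_k`. Because every vertex keeps its self-loop and every window of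
`C` steps is strongly connected, the set of vertices receiving weight at least `τ ^ t` from a
fixed vertex after `t` steps grows in every window, so every product of `nC` consecutive `R`'s
has all entries at least `δ = τ ^ (nC)`. Dobrushin's estimate then shrinks the oscillation of each
column of `M = R_k ⋯ R_{k-C̄+1}` by `1 - δ` per block, so each column of `M` is within
`(1 - δ) ^ ⌊C̄ / nC⌋` of its `v_{k+1}`-average, which is the corresponding entry of `v_{k-C̄+1}`.
Finally `(I - 1 v_{k+1}ᵀ) M = (M - 1 v_{k-C̄+1}ᵀ)(I - 1 v_{k-C̄+1}ᵀ)`, a matrix with entries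
bounded by `ε` acts on `(ℝ^p)^n` with norm at most `nε`, and `γ_B ≥ n (1 - δ) ^ ⌊C̄ / nC⌋`.
-/

open Matrix

/-- A directed graph on `Fin n` with edge set `E ⊆ Fin n × Fin n` is strongly connected:
for every pair of distinct vertices `i, j` there is a directed path from `j` to `i`,
where an edge `(i, j) ∈ E` means `j ⟶ i`. -/
def StronglyConnected {n : ℕ} (E : Set (Fin n × Fin n)) : Prop :=
  ∀ i j : Fin n, i ≠ j → Relation.TransGen (fun a b => (b, a) ∈ E) j i

open Finset

section Products

variable {M : Type*} [Monoid M]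

/-- `prodFrom A s t = A (s + t - 1) * ⋯ * A (s + 1) * A s`. -/
def prodFrom (A : ℕ → M) (s t : ℕ) : M :=
  (((List.range t).map fun i => A (s + i)).reverse).prod

@[simp]
lemma prodFrom_zero (A : ℕ → M) (s : ℕ) : prodFrom A s 0 = 1 := rfl

lemma prodFrom_succ (A : ℕ → M) (s t : ℕ) :
    prodFrom A s (t + 1) = A (s + t) * prodFrom A s t := by
  simp [prodFrom, List.range_succ]

lemma prodFrom_add (A : ℕ → M) (s t u : ℕ) :
    prodFrom A s (t + u) = prodFrom A (s + t) u * prodFrom A s t := by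
  induction u with
  | zero => simp
  | succ u ih => rw [← add_assoc, prodFrom_succ, ih, prodFrom_succ, mul_assoc, add_assoc]

lemma prodFrom_mem {S : Type*} [SetLike S M] [SubmonoidClass S M] {P : S} {A : ℕ → M}
    (hA : ∀ l, A l ∈ P) (s t : ℕ) : prodFrom A s t ∈ P :=
  list_prod_mem (by simp [hA])

end Products

lemma bprod_eq_prodFrom {n : ℕ} (A : ℕ → Matrix (Fin n) (Fin n) ℝ) (lo hi : ℕ) :
    bprod A lo hi = prodFrom A lo (hi + 1 - lo) := rfl

lemma Matrix.vecMul_prodFrom {ι R : Type*} [Fintype ι] [DecidableEq ι] [CommSemiring R]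
    {A : ℕ → Matrix ι ι R} {w : ℕ → ι → R} (hw : ∀ l, w (l + 1) ᵥ* A l = w l) (s t : ℕ) :
    w (s + t) ᵥ* prodFrom A s t = w s := by
  induction t with
  | zero => simp
  | succ t ih => rw [prodFrom_succ, ← vecMul_vecMul, ← add_assoc, hw, ih]

lemma Relation.TransGen.exists_rel_mem_notMem {α : Type*} {r : α → α → Prop} {s : Set α}
    {x y : α} (h : Relation.TransGen r x y) (hx : x ∈ s) (hy : y ∉ s) :
    ∃ a b, a ∈ s ∧ b ∉ s ∧ r a b := by
  induction h with
  | single hxb => exact ⟨x, _, hx, hy, hxb⟩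
  | @tail b c _ hbc ih =>
    by_cases hb : b ∈ s
    · exact ⟨b, c, hb, hy, hbc⟩
    · exact ih hb

section Reach

variable {n C : ℕ} {E : ℕ → Set (Fin n × Fin n)} {A : ℕ → Matrix (Fin n) (Fin n) ℝ} {τ : ℝ}

noncomputable def reachAt (A : ℕ → Matrix (Fin n) (Fin n) ℝ) (τ : ℝ) (s : ℕ) (j : Fin n)
    (t : ℕ) : Finset (Fin n) :=
  {i | τ ^ t ≤ prodFrom A s t i j}

lemma mem_reachAt_self (s : ℕ) (j : Fin n) : j ∈ reachAt A τ s j 0 := by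
  simp [reachAt]

lemma mem_reachAt_succ (hA : ∀ l, A l ∈ rowStochastic ℝ (Fin n))
    (hAτ : ∀ l i j, (i, j) ∈ E l → τ ≤ A l i j) (hτ : 0 ≤ τ) {s t : ℕ} {j a c : Fin n}
    (ha : a ∈ reachAt A τ s j t) (hca : (c, a) ∈ E (s + t)) :
    c ∈ reachAt A τ s j (t + 1) := by
  simp only [reachAt, mem_filter, mem_univ, true_and] at ha ⊢
  have hprod := prodFrom_mem hA s t
  calc τ ^ (t + 1) = τ * τ ^ t := pow_succ' τ t
    _ ≤ A (s + t) c a * prodFrom A s t a j :=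
      mul_le_mul (hAτ _ _ _ hca) ha (pow_nonneg hτ t) (nonneg_of_mem_rowStochastic (hA _))
    _ ≤ (A (s + t) * prodFrom A s t) c j :=
      single_le_sum (f := fun a' => A (s + t) c a' * prodFrom A s t a' j)
        (fun a' _ => mul_nonneg (nonneg_of_mem_rowStochastic (hA _))
          (nonneg_of_mem_rowStochastic hprod)) (mem_univ a)
    _ = prodFrom A s (t + 1) c j := by rw [prodFrom_succ]

lemma reachAt_mono (hA : ∀ l, A l ∈ rowStochastic ℝ (Fin n))
    (hAτ : ∀ l i j, (i, j) ∈ E l → τ ≤ A l i j) (hτ : 0 ≤ τ) (hself : ∀ l i, (i, i) ∈ E l)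
    (s : ℕ) (j : Fin n) : Monotone (reachAt A τ s j) :=
  monotone_nat_of_le_succ fun _ _ hi => mem_reachAt_succ hA hAτ hτ hi (hself _ _)

lemma card_reachAt_lt (hA : ∀ l, A l ∈ rowStochastic ℝ (Fin n))
    (hAτ : ∀ l i j, (i, j) ∈ E l → τ ≤ A l i j) (hτ : 0 ≤ τ) (hself : ∀ l i, (i, i) ∈ E l)
    (hC : 0 < C) (hconn : ∀ k, StronglyConnected (⋃ l ∈ Finset.Icc k (k + C - 1), E l))
    {s : ℕ} {j : Fin n} {t : ℕ} (hne : reachAt A τ s j t ≠ univ) :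
    #(reachAt A τ s j t) < #(reachAt A τ s j (t + C)) := by
  have hmono := reachAt_mono hA hAτ hτ hself s j
  have hsub := hmono (Nat.le_add_right t C)
  refine card_lt_card ((ssubset_iff_of_subset hsub).2 ?_)
  have hj : j ∈ reachAt A τ s j t := hmono (Nat.zero_le t) (mem_reachAt_self s j)
  obtain ⟨y, hy⟩ : ∃ y, y ∉ reachAt A τ s j t := by simpa [eq_univ_iff_forall] using hne
  have hyj : y ≠ j := fun h => hy (h ▸ hj)
  obtain ⟨a, c, ha, hc, hac⟩ :=
    (hconn (s + t) y j hyj).exists_rel_mem_notMem (s := ↑(reachAt A τ s j t)) hj hy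
  simp only [Set.mem_iUnion, mem_Icc, exists_prop] at hac
  obtain ⟨l, ⟨hl₁, hl₂⟩, hca⟩ := hac
  obtain ⟨u, rfl⟩ := Nat.exists_eq_add_of_le (le_trans (Nat.le_add_right s t) hl₁)
  refine ⟨c, hmono (by omega) (mem_reachAt_succ hA hAτ hτ (hmono (by omega) ha) hca), hc⟩

lemma min_le_card_reachAt (hA : ∀ l, A l ∈ rowStochastic ℝ (Fin n))
    (hAτ : ∀ l i j, (i, j) ∈ E l → τ ≤ A l i j) (hτ : 0 ≤ τ) (hself : ∀ l i, (i, i) ∈ E l)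
    (hC : 0 < C) (hconn : ∀ k, StronglyConnected (⋃ l ∈ Finset.Icc k (k + C - 1), E l))
    (s : ℕ) (j : Fin n) (q : ℕ) : min (q + 1) n ≤ #(reachAt A τ s j (q * C)) := by
  induction q with
  | zero =>
    have : 0 < #(reachAt A τ s j (0 * C)) := card_pos.2 ⟨j, by simpa using mem_reachAt_self s j⟩
    omega
  | succ q ih =>
    rw [add_mul, one_mul]
    by_cases hU : reachAt A τ s j (q * C) = univ
    · have huniv := card_le_card
        (hU ▸ reachAt_mono hA hAτ hτ hself s j (Nat.le_add_right (q * C) C))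
      rw [card_univ, Fintype.card_fin] at huniv
      omega
    · have := card_reachAt_lt hA hAτ hτ hself hC hconn hU
      omega

lemma pow_le_prodFrom (hA : ∀ l, A l ∈ rowStochastic ℝ (Fin n))
    (hAτ : ∀ l i j, (i, j) ∈ E l → τ ≤ A l i j) (hτ : 0 ≤ τ) (hself : ∀ l i, (i, i) ∈ E l)
    (hC : 0 < C) (hconn : ∀ k, StronglyConnected (⋃ l ∈ Finset.Icc k (k + C - 1), E l))
    (s : ℕ) (i j : Fin n) : τ ^ (n * C) ≤ prodFrom A s (n * C) i j := by
  have hcard := min_le_card_reachAt hA hAτ hτ hself hC hconn s j n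
  have huniv : reachAt A τ s j (n * C) = univ := by
    apply eq_univ_of_card
    have := card_le_univ (reachAt A τ s j (n * C))
    rw [Fintype.card_fin] at this ⊢
    omega
  have hi : i ∈ reachAt A τ s j (n * C) := huniv ▸ mem_univ i
  simpa [reachAt] using hi

end Reach

section Contraction

variable {ι : Type*} [Fintype ι]

lemma abs_sub_sum_mul_le {w x : ι → ℝ} {ε : ℝ} (hw0 : ∀ l, 0 ≤ w l) (hw1 : ∑ l, w l = 1)
    (hx : ∀ a b, x a - x b ≤ ε) (i : ι) : |x i - ∑ l, w l * x l| ≤ ε := by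
  have h : x i - ∑ l, w l * x l = ∑ l, w l * (x i - x l) := by
    simp only [mul_sub, sum_sub_distrib, ← sum_mul, hw1, one_mul]
  have hε : ∑ l, w l * ε = ε := by rw [← sum_mul, hw1, one_mul]
  rw [h, abs_le, ← hε, ← sum_neg_distrib]
  exact ⟨sum_le_sum fun l _ => by nlinarith [hx l i, hw0 l],
    sum_le_sum fun l _ => mul_le_mul_of_nonneg_left (hx i l) (hw0 l)⟩

variable [DecidableEq ι]

/-- Dobrushin's contraction estimate. -/
lemma Matrix.mulVec_sub_mulVec_le {A : Matrix ι ι ℝ} (hA : A ∈ rowStochastic ℝ ι) {δ ε : ℝ}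
    (hδ0 : 0 ≤ δ) (hδ : ∀ i j, δ ≤ A i j) {z : ι → ℝ} (hz : ∀ a b, z a - z b ≤ ε) (i i' : ι) :
    (A *ᵥ z) i - (A *ᵥ z) i' ≤ (1 - δ) * ε := by
  obtain ⟨a₀, -, ha₀⟩ := exists_min_image univ z ⟨i, mem_univ i⟩
  set μ : ι → ℝ := fun a => min (A i a) (A i' a)
  have hε : 0 ≤ ε := by simpa using hz i i
  have hμ : δ ≤ ∑ a, μ a :=
    (le_min (hδ i i) (hδ i' i)).trans
      (single_le_sum (fun a _ => hδ0.trans (le_min (hδ i a) (hδ i' a))) (mem_univ i))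
  have hδ1 : δ ≤ 1 := (hδ i i).trans (le_one_of_mem_rowStochastic hA)
  -- split off the common part `μ` of rows `i` and `i'`; the rest has mass `1 - ∑ μ` in each
  have hup : ∑ a, (A i a - μ a) * z a ≤ ∑ a, (A i a - μ a) * (z a₀ + ε) :=
    sum_le_sum fun a _ => mul_le_mul_of_nonneg_left (by linarith [hz a a₀])
      (sub_nonneg.2 (min_le_left _ _))
  have hlow : ∑ a, (A i' a - μ a) * z a₀ ≤ ∑ a, (A i' a - μ a) * z a :=
    sum_le_sum fun a _ => mul_le_mul_of_nonneg_left (ha₀ a (mem_univ a))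
      (sub_nonneg.2 (min_le_right _ _))
  simp only [sub_mul, sum_sub_distrib, ← sum_mul, sum_row_of_mem_rowStochastic hA] at hup hlow
  simp only [mulVec, dotProduct]
  nlinarith

lemma prodFrom_mulVec_sub_le {A : ℕ → Matrix ι ι ℝ} (hA : ∀ l, A l ∈ rowStochastic ℝ ι)
    {N : ℕ} {δ ε : ℝ} (hδ0 : 0 ≤ δ) (hδ : ∀ s i j, δ ≤ prodFrom A s N i j) {z : ι → ℝ}
    (hz : ∀ a b, z a - z b ≤ ε) (s q : ℕ) :
    ∀ i i', (prodFrom A s (N * q) *ᵥ z) i - (prodFrom A s (N * q) *ᵥ z) i' ≤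
      (1 - δ) ^ q * ε := by
  induction q with
  | zero => simpa using hz
  | succ q ih =>
    rw [mul_add_one, prodFrom_add, ← mulVec_mulVec, pow_succ', mul_assoc]
    exact mulVec_sub_mulVec_le (prodFrom_mem hA _ _) hδ0 (hδ _) ih

lemma abs_prodFrom_sub_vecMul_le {A : ℕ → Matrix ι ι ℝ} (hA : ∀ l, A l ∈ rowStochastic ℝ ι)
    {N : ℕ} {δ : ℝ} (hδ0 : 0 ≤ δ) (hδ : ∀ s i j, δ ≤ prodFrom A s N i j) {ψ : ι → ℝ}
    (hψ0 : ∀ i, 0 ≤ ψ i) (hψ1 : ∑ i, ψ i = 1) (s c : ℕ) (i a : ι) :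
    |prodFrom A s c i a - (ψ ᵥ* prodFrom A s c) a| ≤ (1 - δ) ^ (c / N) := by
  set Q := prodFrom A s (c % N)
  have hQ : ∀ b b', Q b a - Q b' a ≤ 1 := fun b b' => by
    have hQs := prodFrom_mem hA s (c % N)
    linarith [le_one_of_mem_rowStochastic hQs (i := b) (j := a),
      nonneg_of_mem_rowStochastic hQs (i := b') (j := a)]
  have hcol : ∀ b b', prodFrom A s c b a - prodFrom A s c b' a ≤ (1 - δ) ^ (c / N) := by
    have h := prodFrom_mulVec_sub_le hA hδ0 hδ (z := fun l => Q l a) hQ (s + c % N) (c / N)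
    have hM : prodFrom A s c = prodFrom A (s + c % N) (N * (c / N)) * Q := by
      rw [← prodFrom_add, Nat.mod_add_div]
    intro b b'
    simpa [hM, mul_apply, mulVec, dotProduct] using h b b'
  simp only [vecMul, dotProduct]
  exact abs_sub_sum_mul_le hψ0 hψ1 hcol i

end Contraction

section BlockVectors

variable {n p : ℕ}

lemma mapp_mapp (A B : Matrix (Fin n) (Fin n) ℝ) (x : Fin n → EuclideanSpace ℝ (Fin p)) :
    mapp A (mapp B x) = mapp (A * B) x := by
  funext i
  simp only [mapp, mul_apply, smul_sum, sum_smul, mul_smul]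
  exact sum_comm

lemma proj_mul_eq_sub_mul_proj (M : Matrix (Fin n) (Fin n) ℝ) (hM : M *ᵥ 1 = 1) {ψ : Fin n → ℝ}
    (hψ : ∑ i, ψ i = 1) :
    proj ψ * M = (M - vecMulVec 1 (ψ ᵥ* M)) * proj (ψ ᵥ* M) := by
  have hφ : ψ ᵥ* M ⬝ᵥ 1 = 1 := by
    rw [← dotProduct_mulVec, hM]
    simpa [dotProduct] using hψ
  simp only [proj, ← Pi.one_def, sub_mul, mul_sub, one_mul, mul_one, vecMulVec_mul,
    mul_vecMulVec, vecMulVec_mulVec, hM, hφ, MulOpposite.op_one, one_smul, sub_self, sub_zero]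

lemma bnorm_mapp_le {A : Matrix (Fin n) (Fin n) ℝ} {ε : ℝ} (hA : ∀ i j, |A i j| ≤ ε)
    (x : Fin n → EuclideanSpace ℝ (Fin p)) :
    bnorm (mapp A x) ≤ n * ε * bnorm x := by
  rcases isEmpty_or_nonempty (Fin n) with hn | ⟨⟨i₀⟩⟩
  · simp [bnorm]
  have hε : 0 ≤ ε := (abs_nonneg _).trans (hA i₀ i₀)
  have hrow : ∀ i, ‖mapp A x i‖ ≤ ε * ∑ j, ‖x j‖ := fun i => by
    rw [mul_sum]
    refine (norm_sum_le _ _).trans (sum_le_sum fun j _ => ?_)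
    rw [norm_smul, Real.norm_eq_abs]
    exact mul_le_mul_of_nonneg_right (hA i j) (norm_nonneg _)
  have hcs : (∑ j, ‖x j‖) ^ 2 ≤ n * ∑ j, ‖x j‖ ^ 2 := by
    simpa using sq_sum_le_card_mul_sum_sq (s := univ) (f := fun j => ‖x j‖)
  have hsq : ∑ i, ‖mapp A x i‖ ^ 2 ≤ (n * ε) ^ 2 * ∑ j, ‖x j‖ ^ 2 :=
    calc ∑ i, ‖mapp A x i‖ ^ 2 ≤ ∑ _i : Fin n, (ε * ∑ j, ‖x j‖) ^ 2 :=
          sum_le_sum fun i _ => pow_le_pow_left₀ (norm_nonneg _) (hrow i) 2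
      _ = n * ε ^ 2 * (∑ j, ‖x j‖) ^ 2 := by simp; ring
      _ ≤ n * ε ^ 2 * (n * ∑ j, ‖x j‖ ^ 2) := by gcongr
      _ = (n * ε) ^ 2 * ∑ j, ‖x j‖ ^ 2 := by ring
  unfold bnorm
  rw [← Real.sqrt_sq (by positivity : (0 : ℝ) ≤ n * ε), ← Real.sqrt_mul (sq_nonneg _)]
  exact Real.sqrt_le_sqrt hsq

lemma bnorm_proj_mapp_le {M : Matrix (Fin n) (Fin n) ℝ} (hM : M *ᵥ 1 = 1) {ψ : Fin n → ℝ}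
    (hψ : ∑ i, ψ i = 1) {ε : ℝ} (hdev : ∀ i a, |M i a - (ψ ᵥ* M) a| ≤ ε)
    (x : Fin n → EuclideanSpace ℝ (Fin p)) :
    bnorm (mapp (proj ψ) (mapp M x)) ≤ n * ε * bnorm (mapp (proj (ψ ᵥ* M)) x) := by
  rw [mapp_mapp, proj_mul_eq_sub_mul_proj M hM hψ, ← mapp_mapp]
  exact bnorm_mapp_le (fun i a => by simpa [vecMulVec_apply] using hdev i a) _

end BlockVectors

theorem bnorm_proj_mapp_prodFrom_le {n p C : ℕ} {E : ℕ → Set (Fin n × Fin n)}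
    {R : ℕ → Matrix (Fin n) (Fin n) ℝ} {v : ℕ → Fin n → ℝ} {τ : ℝ}
    (hR : ∀ l, R l ∈ rowStochastic ℝ (Fin n)) (hRv : ∀ l, v (l + 1) ᵥ* R l = v l)
    (hv0 : ∀ l j, 0 ≤ v l j) (hv1 : ∀ l, ∑ j, v l j = 1)
    (hRτ : ∀ l i j, (i, j) ∈ E l → τ ≤ R l i j) (hτ : 0 ≤ τ) (hself : ∀ l i, (i, i) ∈ E l)
    (hC : 0 < C) (hconn : ∀ k, StronglyConnected (⋃ l ∈ Finset.Icc k (k + C - 1), E l))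
    (s c : ℕ) (x : Fin n → EuclideanSpace ℝ (Fin p)) :
    bnorm (mapp (proj (v (s + c))) (mapp (prodFrom R s c) x)) ≤
      n * (1 - τ ^ (n * C)) ^ (c / (n * C)) * bnorm (mapp (proj (v s)) x) := by
  have hφ := vecMul_prodFrom hRv s c
  have hdev := abs_prodFrom_sub_vecMul_le hR (pow_nonneg hτ _)
    (pow_le_prodFrom hR hRτ hτ hself hC hconn) (hv0 (s + c)) (hv1 (s + c)) s c
  rw [← hφ]
  exact bnorm_proj_mapp_le (one_vecMul_of_mem_rowStochastic (prodFrom_mem hR s c)) (hv1 _) hdev x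

section DiagonalScaling

variable {ι : Type*} [Fintype ι] [DecidableEq ι] {B : Matrix ι ι ℝ} {w w' : ι → ℝ}

lemma inv_diagonal_mul_mul_diagonal_apply (hw' : ∀ i, w' i ≠ 0) (i j : ι) :
    ((diagonal w')⁻¹ * B * diagonal w) i j = B i j * w j / w' i := by
  have hinv : (diagonal w')⁻¹ = diagonal w'⁻¹ := inv_eq_right_inv <| by
    rw [diagonal_mul_diagonal, ← diagonal_one]
    exact congrArg diagonal (funext fun i => mul_inv_cancel₀ (hw' i))
  rw [hinv, mul_diagonal, diagonal_mul, Pi.inv_apply, div_eq_inv_mul, mul_assoc]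

lemma inv_diagonal_mul_mul_diagonal_mem_rowStochastic (hB : B ∈ colStochastic ℝ ι)
    (hw : ∀ j, 0 ≤ w j) (hw' : ∀ i, 0 < w' i) (hBw : B *ᵥ w = w') :
    (diagonal w')⁻¹ * B * diagonal w ∈ rowStochastic ℝ ι := by
  have happly := inv_diagonal_mul_mul_diagonal_apply (B := B) (w := w) fun i => (hw' i).ne'
  refine mem_rowStochastic_iff_sum.2 ⟨fun i j => ?_, fun i => ?_⟩
  · rw [happly]
    have := nonneg_of_mem_colStochastic hB (i := i) (j := j)
    have := hw j
    have := hw' i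
    positivity
  · simp only [happly, ← sum_div]
    rw [div_eq_one_iff_eq (hw' i).ne', ← hBw]
    rfl

lemma mul_le_inv_diagonal_mul_mul_diagonal_apply (hB : B ∈ colStochastic ℝ ι) {β m : ℝ}
    (hm : 0 ≤ m) (hw : ∀ j, m ≤ w j) (hw' : ∀ i, 0 < w' i) (hw'1 : ∀ i, w' i ≤ 1) {i j : ι}
    (hβ : β ≤ B i j) : β * m ≤ ((diagonal w')⁻¹ * B * diagonal w) i j := by
  have hBij : 0 ≤ B i j := nonneg_of_mem_colStochastic hB
  rw [inv_diagonal_mul_mul_diagonal_apply fun i => (hw' i).ne']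
  exact (mul_le_mul hβ (hw j) hm hBij).trans
    (le_div_self (mul_nonneg hBij (hm.trans (hw j))) (hw' i) (hw'1 i))

lemma vecMul_inv_diagonal_mul_mul_diagonal (hB : B ∈ colStochastic ℝ ι)
    (hw' : ∀ i, w' i ≠ 0) : w' ᵥ* ((diagonal w')⁻¹ * B * diagonal w) = w := by
  funext j
  simp only [vecMul, dotProduct, inv_diagonal_mul_mul_diagonal_apply hw']
  simp only [mul_div_cancel₀ _ (hw' _), ← sum_mul, sum_col_of_mem_colStochastic hB, one_mul]

end DiagonalScaling

lemma sum_mulVec_iterate_of_mem_colStochastic {ι : Type*} [Fintype ι] [DecidableEq ι]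
    {B : ℕ → Matrix ι ι ℝ} (hB : ∀ k, B k ∈ colStochastic ℝ ι) {v : ℕ → ι → ℝ}
    (hv : ∀ k, v (k + 1) = B k *ᵥ v k) (k : ℕ) : ∑ j, v k j = ∑ j, v 0 j := by
  induction k with
  | zero => rfl
  | succ k ih => rw [hv, sum_mulVec_of_mem_colStochastic (hB k), ih]

lemma pow_div_le_rpow_div {x : ℝ} (hx0 : 0 < x) (hx1 : x ≤ 1) (c : ℕ) {N : ℕ} (hN : 0 < N) :
    x ^ (c / N) ≤ x ^ (((c : ℝ) - 1) / N) / x := by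
  rw [le_div_iff₀ hx0, ← pow_succ, ← Real.rpow_natCast]
  apply Real.rpow_le_rpow_of_exponent_ge hx0 hx1
  have hc : (c : ℝ) < N * ((c / N : ℕ) + 1) := by exact_mod_cast Nat.lt_mul_div_succ c hN
  rw [div_le_iff₀ (by positivity)]
  push_cast
  linarith

lemma mul_pow_div_le {n δ : ℝ} (hn : 0 ≤ n) (hδ0 : 0 < δ) (hδ1 : δ < 1) (c : ℕ) {N : ℕ}
    (hN : 0 < N) :
    n * (1 - δ) ^ (c / N) ≤ 2 * n * (1 + δ⁻¹) / (1 - δ) * (1 - δ) ^ (((c : ℝ) - 1) / N) := by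
  have hδ' : 0 < 1 - δ := by linarith
  calc n * (1 - δ) ^ (c / N) ≤ n * ((1 - δ) ^ (((c : ℝ) - 1) / N) / (1 - δ)) := by
        gcongr
        exact pow_div_le_rpow_div hδ' (by linarith) c hN
    _ = n / (1 - δ) * (1 - δ) ^ (((c : ℝ) - 1) / N) := by ring
    _ ≤ 2 * n * (1 + δ⁻¹) / (1 - δ) * (1 - δ) ^ (((c : ℝ) - 1) / N) := by
        gcongr
        nlinarith [inv_pos.2 hδ0]

theorem stmt13_general (n p C : ℕ) (hn : 1 ≤ n) (hC : 1 ≤ C)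
    (β : ℝ) (hβ : β ∈ Set.Ioo (0 : ℝ) 1)
    (E : ℕ → Set (Fin n × Fin n))
    (hself : ∀ k (i : Fin n), (i, i) ∈ E k)
    (hconn : ∀ k, StronglyConnected (⋃ l ∈ Finset.Icc k (k + C - 1), E l))
    (B : ℕ → Matrix (Fin n) (Fin n) ℝ)
    (hBnn : ∀ k i j, 0 ≤ B k i j) (hBcol : ∀ k j, ∑ i, B k i j = 1)
    (hBβ : ∀ k i j, (i, j) ∈ E k → β ≤ B k i j)
    (v : ℕ → Fin n → ℝ)
    (hv0 : v 0 = fun _ => 1 / (n : ℝ))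
    (hvrec : ∀ k, v (k + 1) = (B k).mulVec (v k))
    (hvlb : ∀ k j, 1 / (n : ℝ) ^ (n * C + 1) ≤ v k j)
    (R : ℕ → Matrix (Fin n) (Fin n) ℝ)
    (hR : ∀ k, R k = (Matrix.diagonal (v (k + 1)))⁻¹ * B k * Matrix.diagonal (v k))
    (τ : ℝ) (hτ : τ = β / (n : ℝ) ^ (n * C + 1))
    (QB : ℝ) (hQB : QB = 2 * n * (1 + (τ ^ (n * C))⁻¹) / (1 - τ ^ (n * C)))
    (CbB : ℕ)
    (γB : ℝ)
    (hγB : γB = QB * (1 - τ ^ (n * C)) ^ (((CbB : ℝ) - 1) / ((n : ℝ) * C))) :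
    ∀ k, CbB - 1 ≤ k → ∀ b : Fin n → EuclideanSpace ℝ (Fin p),
      bnorm (mapp (proj (v (k + 1))) (mapp (bprod R (k + 1 - CbB) k) b)) ≤
        γB * bnorm (mapp (proj (v (k + 1 - CbB))) b) := by
  intro k hk b
  have hB : ∀ k, B k ∈ colStochastic ℝ (Fin n) := fun k =>
    mem_colStochastic_iff_sum.2 ⟨hBnn k, hBcol k⟩
  have hnpos : (0 : ℝ) < n := by exact_mod_cast hn
  have hvpos : ∀ l j, 0 < v l j := fun l j =>
    (by positivity : (0 : ℝ) < 1 / (n : ℝ) ^ (n * C + 1)).trans_le (hvlb l j)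
  have hvsum : ∀ l, ∑ j, v l j = 1 := fun l => by
    rw [sum_mulVec_iterate_of_mem_colStochastic hB hvrec, hv0]
    simp [hnpos.ne']
  have hRstoch : ∀ l, R l ∈ rowStochastic ℝ (Fin n) := fun l => hR l ▸
    inv_diagonal_mul_mul_diagonal_mem_rowStochastic (hB l) (fun j => (hvpos l j).le)
      (hvpos (l + 1)) (hvrec l).symm
  have hRv : ∀ l, v (l + 1) ᵥ* R l = v l := fun l => hR l ▸
    vecMul_inv_diagonal_mul_mul_diagonal (hB l) fun i => (hvpos (l + 1) i).ne'
  have hvle : ∀ l i, v l i ≤ 1 := fun l i =>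
    hvsum l ▸ single_le_sum (fun j _ => (hvpos l j).le) (mem_univ i)
  have hRτ : ∀ l i j, (i, j) ∈ E l → τ ≤ R l i j := fun l i j hij => by
    rw [hR, hτ, div_eq_mul_one_div β]
    exact mul_le_inv_diagonal_mul_mul_diagonal_apply (hB l) (by positivity) (hvlb l)
      (hvpos (l + 1)) (hvle (l + 1)) (hBβ l i j hij)
  have hτ0 : 0 < τ := hτ ▸ div_pos hβ.1 (by positivity)
  have hτ1 : τ < 1 :=
    hτ ▸ (div_le_self hβ.1.le (one_le_pow₀ (by exact_mod_cast hn))).trans_lt hβ.2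
  have hγ : n * (1 - τ ^ (n * C)) ^ (CbB / (n * C)) ≤ γB := by
    have hnC : 0 < n * C := Nat.mul_pos hn hC
    rw [hγB, hQB]
    simpa using mul_pow_div_le hnpos.le (pow_pos hτ0 _) (pow_lt_one₀ hτ0.le hτ1 hnC.ne') CbB hnC
  have hcontr := bnorm_proj_mapp_prodFrom_le hRstoch hRv (fun l j => (hvpos l j).le) hvsum hRτ
    hτ0.le hself hC hconn (k + 1 - CbB) CbB b
  rw [show k + 1 - CbB + CbB = k + 1 by omega] at hcontr
  rw [bprod_eq_prodFrom, show k + 1 - (k + 1 - CbB) = CbB by omega]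
  exact hcontr.trans (mul_le_mul_of_nonneg_right hγ (Real.sqrt_nonneg _))

/-- `C̄_B`-step contraction for the sequence `R_k = diag(v_{k+1})⁻¹ B_k diag(v_k)`
(Corollary 9 of the paper). -/
theorem stmt13 (n p C : ℕ) (hn : 1 ≤ n) (hp : 1 ≤ p) (hC : 1 ≤ C)
    (β : ℝ) (hβ : β ∈ Set.Ioo (0 : ℝ) 1)
    (E : ℕ → Set (Fin n × Fin n))
    (hself : ∀ k (i : Fin n), (i, i) ∈ E k)
    (hconn : ∀ k, StronglyConnected (⋃ l ∈ Finset.Icc k (k + C - 1), E l))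
    (B : ℕ → Matrix (Fin n) (Fin n) ℝ)
    (hBnn : ∀ k i j, 0 ≤ B k i j) (hBcol : ∀ k j, ∑ i, B k i j = 1)
    (hBcomp : ∀ k i j, 0 < B k i j ↔ (i, j) ∈ E k)
    (hBβ : ∀ k i j, (i, j) ∈ E k → β ≤ B k i j)
    (v : ℕ → Fin n → ℝ)
    (hv0 : v 0 = fun _ => 1 / (n : ℝ))
    (hvrec : ∀ k, v (k + 1) = (B k).mulVec (v k))
    (hvlb : ∀ k j, 1 / (n : ℝ) ^ (n * C + 1) ≤ v k j)
    (R : ℕ → Matrix (Fin n) (Fin n) ℝ)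
    (hR : ∀ k, R k = (Matrix.diagonal (v (k + 1)))⁻¹ * B k * Matrix.diagonal (v k))
    (τ : ℝ) (hτ : τ = β / (n : ℝ) ^ (n * C + 1))
    (QB : ℝ) (hQB : QB = 2 * n * (1 + (τ ^ (n * C))⁻¹) / (1 - τ ^ (n * C)))
    (CbB : ℕ) (hCbB : C ≤ CbB)
    (γB : ℝ)
    (hγB : γB = QB * (1 - τ ^ (n * C)) ^ (((CbB : ℝ) - 1) / ((n : ℝ) * C)))
    (hγB1 : γB < 1) :
    ∀ k, CbB - 1 ≤ k → ∀ b : Fin n → EuclideanSpace ℝ (Fin p),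
      bnorm (mapp (proj (v (k + 1))) (mapp (bprod R (k + 1 - CbB) k) b)) ≤
        γB * bnorm (mapp (proj (v (k + 1 - CbB))) b) :=
  stmt13_general n p C hn hC β hβ E hself hconn B hBnn hBcol hBβ v hv0 hvrec hvlb R hR τ hτ QB hQB
    CbB γB hγB
end
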